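/- If all ratios equal 1, i.e. σ_1 = ⋯ = σ_{N-1} = 1, then the only solution of the critical-point coefficient system (with r_2 = 0) is r_1 = r_3 = ⋯ = r_N = 0. Equivalently: if x_k = r_{k+1} for all k = 1, ..., N-1 in the identity n·Π_{k=1}^{N-1}(x - x_k) = Σ_{j=1}^N m_j Π_{i≠j}(x - r_i) with r_2 = 0, then r_1 = r_3 = ⋯ = r_N = 0. -/
import Mathlib

open Finset Polynomial

/-- If all ratios equal `1` (i.e. `x_k = r_{k+1}` for all `k`) in the identity
`n ∏ (x - x_k) = ∑ m_j ∏_{i ≠ j} (x - r_i)` with `r₂ = 0`, then all roots vanish. -/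

theorem stmt_18 (N : ℕ) (hN : 2 ≤ N) (m : Fin N → ℝ) (hm : ∀ i, 0 < m i)
    (n : ℝ) (hn : n = ∑ i, m i)
    (r : Fin N → ℂ) (hr2 : r ⟨1, by omega⟩ = 0)
    (hid : ∀ z : ℂ,
      (n : ℂ) * ∏ k : Fin (N - 1), (z - r ⟨(k : ℕ) + 1, by have := k.isLt; omega⟩) =
        ∑ j : Fin N, (m j : ℂ) * ∏ i ∈ Finset.univ.erase j, (z - r i)) :
    ∀ i, r i = 0 := by
  classical
  obtain ⟨M, rfl⟩ : ∃ M, N = M + 2 := ⟨N - 2, by omega⟩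
  set V : Finset ℂ := Finset.image r Finset.univ with hV
  set Ms : ℂ → ℝ := fun s => ∑ j ∈ Finset.univ.filter (fun j => r j = s), m j with hMs
  -- key identity for all z
  have key : ∀ z : ℂ, (n:ℂ) * ∏ i, (z - r i) =
      ∑ j, (m j : ℂ) * ((z - r 0) * ∏ i ∈ Finset.univ.erase j, (z - r i)) := by
    intro z
    have h := hid z
    have hprod : ∏ i, (z - r i) = (z - r 0) * ∏ k : Fin (M+1), (z - r (Fin.succ k)) :=
      Fin.prod_univ_succ _
    have hsame : (∏ k : Fin (M+2-1), (z - r ⟨(k : ℕ) + 1, by have := k.isLt; omega⟩))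
        = ∏ k : Fin (M+1), (z - r (Fin.succ k)) := rfl
    rw [hsame] at h
    calc (n:ℂ) * ∏ i, (z - r i) = (z - r 0) * ((n:ℂ) * ∏ k : Fin (M+1), (z - r (Fin.succ k))) := by
          rw [hprod]; ring
      _ = (z - r 0) * ∑ j, (m j : ℂ) * ∏ i ∈ Finset.univ.erase j, (z - r i) := by rw [h]
      _ = _ := by rw [Finset.mul_sum]; apply Finset.sum_congr rfl; intro j _; ring
  -- grouped identity off V
  have grouped : ∀ z : ℂ, (∀ i, z ≠ r i) →
      (n:ℂ) * ∏ s ∈ V, (z - s) =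
        ∑ s ∈ V, (Ms s : ℂ) * ((z - r 0) * ∏ t ∈ V.erase s, (z - t)) := by
    intro z hz
    have hQ : (∏ i, (z - r i)) ≠ 0 :=
      Finset.prod_ne_zero_iff.2 fun i _ => sub_ne_zero.2 (hz i)
    have h1 : (n:ℂ) = ∑ j, (m j : ℂ) * ((z - r 0) / (z - r j)) := by
      apply mul_right_cancel₀ hQ
      rw [key z, Finset.sum_mul]
      apply Finset.sum_congr rfl
      intro j _
      rw [← Finset.mul_prod_erase Finset.univ _ (Finset.mem_univ j)]
      have : z - r j ≠ 0 := sub_ne_zero.2 (hz j)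
      field_simp
    have h2 : ∑ j, (m j : ℂ) * ((z - r 0) / (z - r j)) =
        ∑ s ∈ V, (Ms s : ℂ) * ((z - r 0) / (z - s)) := by
      rw [← Finset.sum_fiberwise_of_maps_to
        (fun j _ => Finset.mem_image_of_mem r (Finset.mem_univ j))
        (fun j => (m j : ℂ) * ((z - r 0) / (z - r j)))]
      apply Finset.sum_congr rfl
      intro s _
      have : ∑ j ∈ Finset.univ.filter (fun j => r j = s),
          (m j : ℂ) * ((z - r 0) / (z - r j)) =
          ∑ j ∈ Finset.univ.filter (fun j => r j = s), (m j : ℂ) * ((z - r 0) / (z - s)) := by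
        apply Finset.sum_congr rfl
        intro j hj
        rw [(Finset.mem_filter.1 hj).2]
      rw [this, ← Finset.sum_mul, hMs]
      push_cast
      ring
    have hzV : ∀ s ∈ V, z - s ≠ 0 := by
      intro s hs
      obtain ⟨j, _, rfl⟩ := Finset.mem_image.1 hs
      exact sub_ne_zero.2 (hz j)
    calc (n:ℂ) * ∏ s ∈ V, (z - s)
        = (∑ s ∈ V, (Ms s : ℂ) * ((z - r 0) / (z - s))) * ∏ s ∈ V, (z - s) := by
          rw [← h2, ← h1]
      _ = _ := by
          rw [Finset.sum_mul]
          apply Finset.sum_congr rfl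
          intro s hs
          rw [← Finset.mul_prod_erase V _ hs]
          have := hzV s hs
          field_simp
  -- polynomial identity
  set P : Polynomial ℂ := Polynomial.C (n:ℂ) * ∏ s ∈ V, (Polynomial.X - Polynomial.C s) with hP
  set Q : Polynomial ℂ := ∑ s ∈ V, Polynomial.C ((Ms s : ℂ)) *
      ((Polynomial.X - Polynomial.C (r 0)) * ∏ t ∈ V.erase s, (Polynomial.X - Polynomial.C t))
    with hQdef
  have hPQ : P = Q := by
    apply Polynomial.eq_of_infinite_eval_eq
    apply Set.Infinite.mono (s := (↑V : Set ℂ)ᶜ)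
    · intro z hz
      have hz' : ∀ i, z ≠ r i := by
        intro i hzi
        exact hz (by simp only [hV, hzi]; exact Finset.mem_image_of_mem r (Finset.mem_univ i))
      have := grouped z hz'
      simp only [Set.mem_setOf_eq, hP, hQdef, Polynomial.eval_mul, Polynomial.eval_prod,
        Polynomial.eval_finset_sum, Polynomial.eval_C, Polynomial.eval_sub, Polynomial.eval_X]
      exact this
    · exact Set.Finite.infinite_compl (Finset.finite_toSet V)
  -- each value equals r 0
  have hall : ∀ i, r i = r 0 := by
    intro i
    have hs : r i ∈ V := Finset.mem_image_of_mem r (Finset.mem_univ i)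
    have hev := congrArg (Polynomial.eval (r i)) hPQ
    simp only [hP, hQdef, Polynomial.eval_mul, Polynomial.eval_prod, Polynomial.eval_finset_sum,
      Polynomial.eval_C, Polynomial.eval_sub, Polynomial.eval_X] at hev
    have hL : (n:ℂ) * ∏ s ∈ V, (r i - s) = 0 := by
      rw [Finset.prod_eq_zero hs (sub_self _)]; ring
    rw [hL] at hev
    have hsingle : (0:ℂ) = (Ms (r i) : ℂ) * ((r i - r 0) * ∏ t ∈ V.erase (r i), (r i - t)) := by
      rw [hev, Finset.sum_eq_single_of_mem (r i) hs]
      intro s hsV hne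
      have hmem : r i ∈ V.erase s := Finset.mem_erase.2 ⟨Ne.symm hne, hs⟩
      rw [Finset.prod_eq_zero hmem (sub_self _)]
      ring
    have hMpos : 0 < Ms (r i) := by
      apply Finset.sum_pos (fun j _ => hm j)
      exact ⟨i, Finset.mem_filter.2 ⟨Finset.mem_univ i, rfl⟩⟩
    have hMne : (Ms (r i) : ℂ) ≠ 0 := by
      simp only [ne_eq, Complex.ofReal_eq_zero]
      exact ne_of_gt hMpos
    have hprodne : (∏ t ∈ V.erase (r i), (r i - t)) ≠ 0 := by
      apply Finset.prod_ne_zero_iff.2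
      intro t ht
      exact sub_ne_zero.2 (Ne.symm (Finset.mem_erase.1 ht).1)
    have := hsingle.symm
    rcases mul_eq_zero.1 this with h | h
    · exact absurd h hMne
    · rcases mul_eq_zero.1 h with h' | h'
      · exact sub_eq_zero.1 h'
      · exact absurd h' hprodne
  have h0 : r 0 = 0 := by
    have := hall ⟨1, by omega⟩
    rw [hr2] at this
    exact this.symm
  intro i
  rw [hall i, h0]
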